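/- arXiv:1707.05819 — 2 statements merged into one kernel-verified Lean document; each statement's English description precedes it below -/
import Mathlib

section
/- If e ∈ N is primitive, then for any field k the quotient ring k[N]/(1 + z^e) is an integral domain; consequently 1 + z^e generates a prime ideal of the Laurent polynomial group algebra k[N]. -/
/-!
Since `f e = 1` for a linear form `f`, every `n` splits as `(n - f(n) e) + f(n) e`, and
`z^n ↦ u^(f n) z^(n - f(n) e)` is a ring endomorphism of `R[N]` which sends `z^e` to `u` and
agrees with the quotient map modulo `z^e - u`; hence its kernel is exactly `(z^e - u)`.
For `u = -1` over a field this is the kernel of a map into `k[N]`, a domain because a free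
`ℤ`-module has unique sums, so the ideal is prime.
-/

open AddMonoidAlgebra

theorem Module.Free.uniqueSums (R M : Type*) [Semiring R] [UniqueSums R] [AddCommMonoid M]
    [Module R M] [Module.Free R M] : UniqueSums M :=
  let b := Module.Free.chooseBasis R M
  .of_injective_addHom b.repr.toAddMonoidHom.toAddHom b.repr.injective inferInstance

namespace AddMonoidAlgebra

variable {R N : Type*} [CommRing R] [AddCommGroup N]

theorem map_single_zsmul_of_map_single_eq {S F : Type*} [Semiring S] [FunLike F R[N] S]
    [RingHomClass F R[N] S] (φ : F) {e : N} {u : Rˣ}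
    (h : φ (single e 1) = φ (algebraMap R R[N] u)) (m : ℤ) :
    φ (single (m • e) 1) = φ (algebraMap R R[N] ↑(u ^ m)) := by
  have := MonoidHom.ext_mint (f := ((φ : R[N] →* S).comp (of R N)).comp
      (AddMonoidHom.toMultiplicative (zmultiplesHom N e)))
    (g := ((φ : R[N] →* S).comp (algebraMap R R[N] : R →* R[N])).comp
      ((Units.coeHom R).comp (zpowersHom Rˣ u))) (by simpa using h)
  simpa using DFunLike.congr_fun this (.ofAdd m)

/-- `z^n ↦ u^(f n) z^(n - f(n) e)`. -/
noncomputable def retraction (f : N →+ ℤ) (e : N) (u : Rˣ) : R[N] →ₐ[R] R[N] :=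
  lift R R[N] N <|
    (of R N).comp (AddMonoidHom.toMultiplicative (.id N - (zmultiplesHom N e).comp f)) *
      (algebraMap R R[N] : R →* R[N]).comp
        ((Units.coeHom R).comp ((zpowersHom Rˣ u).comp (AddMonoidHom.toMultiplicative f)))

variable (f : N →+ ℤ) (e : N) (u : Rˣ)

theorem retraction_single_one (n : N) :
    retraction f e u (single n 1) = single (n - f n • e) 1 * algebraMap R R[N] ↑(u ^ f n) := by
  simp [retraction]

variable {f e}

theorem retraction_single_one_of_eq_one (he : f e = 1) :
    retraction f e u (single e 1) = algebraMap R R[N] u := by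
  simp [retraction_single_one, he]

theorem ker_retraction (he : f e = 1) :
    RingHom.ker (retraction f e u) = Ideal.span {single e 1 - algebraMap R R[N] u} := by
  set I := Ideal.span {single e 1 - algebraMap R R[N] u}
  refine le_antisymm (fun x hx => ?_) ?_
  · let π := Ideal.Quotient.mkₐ R I
    have hπe : π (single e 1) = π (algebraMap R R[N] u) := by
      rw [← sub_eq_zero, ← map_sub]
      exact Ideal.Quotient.eq_zero_iff_mem.2 (Ideal.subset_span rfl)
    have hπ : π.comp (retraction f e u) = π := by
      refine algHom_ext (fun n => ?_) (Subsingleton.elim _ _)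
      have hn : single n (1 : R) = single (n - f n • e) 1 * single (f n • e) 1 := by
        rw [single_mul_single, one_mul, sub_add_cancel]
      rw [AlgHom.comp_apply, retraction_single_one, hn, map_mul, map_mul,
        map_single_zsmul_of_map_single_eq π hπe]
    rw [← Ideal.Quotient.eq_zero_iff_mem]
    calc Ideal.Quotient.mk I x = π (retraction f e u x) := by rw [← AlgHom.comp_apply, hπ]; rfl
      _ = 0 := by rw [RingHom.mem_ker.1 hx, map_zero]
  · rw [Ideal.span_le, Set.singleton_subset_iff, SetLike.mem_coe, RingHom.mem_ker, map_sub,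
      retraction_single_one_of_eq_one u he, AlgHom.commutes, sub_self]

end AddMonoidAlgebra

theorem one_add_ze_prime_general
    (k : Type*) [Field k]
    {N : Type*} [AddCommGroup N] [Module ℤ N] [Module.Free ℤ N]
    (e : N) (hprim : ∃ f : Module.Dual ℤ N, f e = 1) :
    IsDomain (AddMonoidAlgebra k N ⧸
        Ideal.span {(1 + AddMonoidAlgebra.single e (1 : k) : AddMonoidAlgebra k N)}) ∧
    (Ideal.span {(1 + AddMonoidAlgebra.single e (1 : k) : AddMonoidAlgebra k N)}).IsPrime := by
  obtain ⟨f, hf⟩ := hprim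
  have : UniqueSums N := Module.Free.uniqueSums ℤ N
  have hker : RingHom.ker (retraction f.toAddMonoidHom e (-1 : kˣ)) =
      Ideal.span {(1 + single e 1 : k[N])} := by
    rw [ker_retraction _ hf, Units.val_neg, Units.val_one, map_neg, map_one, sub_neg_eq_add,
      add_comm]
  have hprime := hker ▸ RingHom.ker_isPrime (retraction f.toAddMonoidHom e (-1 : kˣ))
  exact ⟨(Ideal.Quotient.isDomain_iff_prime _).mpr hprime, hprime⟩

/-- If `e ∈ N` is primitive, then for any field `k` the quotient
`k[N]/(1 + z^e)` is an integral domain; consequently `1 + z^e` generates a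
prime ideal of the Laurent polynomial group algebra `k[N]`. -/
theorem one_add_ze_prime
    (k : Type*) [Field k]
    {N : Type*} [AddCommGroup N] [Module ℤ N] [Module.Free ℤ N] [Module.Finite ℤ N]
    (e : N) (hprim : ∃ f : Module.Dual ℤ N, f e = 1) :
    IsDomain (AddMonoidAlgebra k N ⧸
        Ideal.span {(1 + AddMonoidAlgebra.single e (1 : k) : AddMonoidAlgebra k N)}) ∧
    (Ideal.span {(1 + AddMonoidAlgebra.single e (1 : k) : AddMonoidAlgebra k N)}).IsPrime :=
  one_add_ze_prime_general k e hprim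
end

section
/- Mutation identity for sections over an unfrozen chart: for j ∈ I_uf and m ∈ M_I, applying the substitution z^n ↦ z^n(1+z^{e_j})^{−[n,e_j]} to the set { z^m z^n (1+z^{e_j})^k : n ∈ N, k ≥ −⟨e_j,m⟩ } and then the map z^m z^n ↦ z^{(m+p̄₁(n),n)}, z^{e_j}-terms via (1+z^{e_j}) ↦ (1+z^{(p̄₁(e_j),e_j)}), yields exactly the set { z^{(m+p̄₁(n),n)}(1+z^{(p̄₁(e_j),e_j)})^{−⟨e_j, m+p̄₁(n)⟩+ℓ} : n ∈ N, ℓ ≥ 0 }. -/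
/-! Since `⟨e_j, p̄₁(n)⟩ = [n, e_j]`, the exponent `-[n, e_j] + t` equals
`-⟨e_j, m + p̄₁(n)⟩ + (t + ⟨e_j, m⟩)`: both sets are the same family, reindexed by
`ℓ = t + ⟨e_j, m⟩`. -/

theorem Module.Basis.sum_smulRight_coord_apply_self {R M P ι : Type*} [CommRing R]
    [AddCommGroup M] [Module R M] [AddCommGroup P] [Module R P] [Fintype ι]
    (b : Module.Basis ι R M) (f : ι → P →ₗ[R] R) (p : P) (j : ι) :
    (∑ i, (f i).smulRight (b.coord i)) p (b j) = f j p := by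
  classical
  simp [Finsupp.single_apply]

theorem unfrozen_chart_mutation_sets_general
    (k : Type*) [Field k]
    {N : Type*} [AddCommGroup N] [Module ℤ N]
    (B : N →ₗ[ℤ] N →ₗ[ℤ] ℤ) (NI : Submodule ℤ N)
    {I : Type*} [Fintype I] (b : Module.Basis I ℤ ↥NI)
    (j : I) (m : Module.Dual ℤ ↥NI)
    (K : Type*) [Field K] [Algebra (AddMonoidAlgebra k (Module.Dual ℤ ↥NI × N)) K] :
    let A := AddMonoidAlgebra k (Module.Dual ℤ ↥NI × N)
    let p1bar : N →ₗ[ℤ] Module.Dual ℤ ↥NI :=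
      ∑ i : I, (B.flip ((b i : N))).smulRight (b.coord i)
    let Z : Module.Dual ℤ ↥NI × N → K :=
      fun q => algebraMap A K (AddMonoidAlgebra.single q (1 : k))
    let g : Module.Dual ℤ ↥NI × N := (p1bar (b j : N), (b j : N))
    {x : K | ∃ (n : N) (t : ℤ), t ≥ -(m (b j)) ∧
        x = Z (m + p1bar n, n) * (1 + Z g) ^ (-(B n ((b j : N))) + t)} =
      {x : K | ∃ (n : N) (l : ℤ), l ≥ 0 ∧
        x = Z (m + p1bar n, n) * (1 + Z g) ^ (-((m + p1bar n) (b j)) + l)} := by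
  intro A p1bar Z g
  have hpair (n : N) : (m + p1bar n) (b j) = m (b j) + B n (b j) := by
    simp only [p1bar, LinearMap.add_apply, Module.Basis.sum_smulRight_coord_apply_self,
      LinearMap.flip_apply]
  ext x
  constructor
  · rintro ⟨n, t, ht, rfl⟩
    refine ⟨n, t + m (b j), by omega, ?_⟩
    rw [hpair]; ring_nf
  · rintro ⟨n, l, hl, rfl⟩
    refine ⟨n, l - m (b j), by omega, ?_⟩
    rw [hpair]; ring_nf

/-- Mutation identity for sections over an unfrozen chart: applying
the mutation `z^n ↦ z^n(1+z^{e_j})^{−[n,e_j]}` to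
`{ z^m z^n (1+z^{e_j})^k : n ∈ N, k ≥ −⟨e_j,m⟩ }` and then
`p̃₂^♯` (`z^m z^n ↦ z^{(m+p̄₁(n),n)}`, `1+z^{e_j} ↦ 1+z^{(p̄₁(e_j),e_j)}`) yields
exactly `{ z^{(m+p̄₁(n),n)}(1+z^{(p̄₁(e_j),e_j)})^{−⟨e_j, m+p̄₁(n)⟩+ℓ} : n ∈ N, ℓ ≥ 0 }`
(as subsets of the fraction field of `k[M_I ⊕ N]`). -/
theorem unfrozen_chart_mutation_sets
    (k : Type*) [Field k]
    {N : Type*} [AddCommGroup N] [Module ℤ N] [Module.Free ℤ N] [Module.Finite ℤ N]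
    (B : N →ₗ[ℤ] N →ₗ[ℤ] ℤ) (NI : Submodule ℤ N)
    {I : Type*} [Fintype I] (b : Module.Basis I ℤ ↥NI)
    (j : I) (hj : B ((b j : N)) ((b j : N)) = 0) (m : Module.Dual ℤ ↥NI)
    (K : Type*) [Field K] [Algebra (AddMonoidAlgebra k (Module.Dual ℤ ↥NI × N)) K]
    [IsFractionRing (AddMonoidAlgebra k (Module.Dual ℤ ↥NI × N)) K] :
    let A := AddMonoidAlgebra k (Module.Dual ℤ ↥NI × N)
    let p1bar : N →ₗ[ℤ] Module.Dual ℤ ↥NI :=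
      ∑ i : I, (B.flip ((b i : N))).smulRight (b.coord i)
    let Z : Module.Dual ℤ ↥NI × N → K :=
      fun q => algebraMap A K (AddMonoidAlgebra.single q (1 : k))
    let g : Module.Dual ℤ ↥NI × N := (p1bar (b j : N), (b j : N))
    {x : K | ∃ (n : N) (t : ℤ), t ≥ -(m (b j)) ∧
        x = Z (m + p1bar n, n) * (1 + Z g) ^ (-(B n ((b j : N))) + t)} =
      {x : K | ∃ (n : N) (l : ℤ), l ≥ 0 ∧
        x = Z (m + p1bar n, n) * (1 + Z g) ^ (-((m + p1bar n) (b j)) + l)} :=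
  unfrozen_chart_mutation_sets_general k B NI b j m K
end
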